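/- arXiv:2105.15145 — 2 statements merged into one kernel-verified Lean document; each statement's English description precedes it below -/
import Mathlib

section
/- Let A be a subfield of a field B and let T = A + X·B[X]. For a polynomial f ∈ B[X]: f belongs to T and is irreducible in T if and only if f is irreducible in B[X] and its constant coefficient f(0) lies in A. -/
/-- The polynomial composite `A + X·B[X]`: the subring of `B[X]` of polynomials
whose constant coefficient lies in `A`. -/
def Subring.composite {B : Type*} [CommRing B] (A : Subring B) : Subring (Polynomial B) where
  carrier := {f : Polynomial B | f.coeff 0 ∈ A}
  mul_mem' {f g} hf hg := by
    simp only [Set.mem_setOf_eq, Polynomial.mul_coeff_zero] at *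
    exact mul_mem hf hg
  one_mem' := by
    simp only [Set.mem_setOf_eq, Polynomial.coeff_one_zero]
    exact one_mem A
  add_mem' {f g} hf hg := by
    simp only [Set.mem_setOf_eq, Polynomial.coeff_add] at *
    exact add_mem hf hg
  zero_mem' := by
    simp only [Set.mem_setOf_eq, Polynomial.coeff_zero]
    exact zero_mem A
  neg_mem' {f} hf := by
    simp only [Set.mem_setOf_eq, Polynomial.coeff_neg] at *
    exact neg_mem hf

theorem Subring.mem_composite {B : Type*} [CommRing B] (A : Subring B) (f : Polynomial B) :
    f ∈ A.composite ↔ f.coeff 0 ∈ A := Iff.rfl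

/-! A factorization `f = g * h` in `B[X]` with `f(0) ∈ A` can be rescaled by a nonzero constant,
`f = (c • g) * (c⁻¹ • h)`, so that both factors have constant coefficient in `A`. The units of
`A + X·B[X]` are the nonzero constants in `A`, which are exactly its elements that are units of
`B[X]`. So factorizations into non-units in `B[X]` and in `A + X·B[X]` correspond. -/

open Polynomial

namespace Subfield

variable {B : Type*} [Field B] (A : Subfield B)

theorem exists_ne_zero_mul_mem_and_inv_mul_mem {a b : B} (hab : a * b ∈ A) :
    ∃ c : B, c ≠ 0 ∧ c * a ∈ A ∧ c⁻¹ * b ∈ A := by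
  by_cases ha : a = 0
  · by_cases hb : b = 0
    · exact ⟨1, one_ne_zero, by simp [ha, A.zero_mem], by simp [hb, A.zero_mem]⟩
    · exact ⟨b, hb, by simp [ha, A.zero_mem], by simp [hb, A.one_mem]⟩
  · exact ⟨a⁻¹, inv_ne_zero ha, by simp [ha, A.one_mem], by simpa using hab⟩

theorem exists_C_mul_mem_composite_and_C_inv_mul_mem_composite {g h : B[X]}
    (hgh : g * h ∈ A.toSubring.composite) :
    ∃ c : B, c ≠ 0 ∧ C c * g ∈ A.toSubring.composite ∧ C c⁻¹ * h ∈ A.toSubring.composite := by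
  simp only [Subring.mem_composite, mul_coeff_zero, coeff_C_zero] at hgh ⊢
  exact A.exists_ne_zero_mul_mem_and_inv_mul_mem hgh

theorem isUnit_composite_iff {g : A.toSubring.composite} : IsUnit g ↔ IsUnit (g : B[X]) := by
  refine ⟨fun hg => hg.map A.toSubring.composite.subtype, fun hg => ?_⟩
  obtain ⟨b, hb, hbg⟩ := Polynomial.isUnit_iff.mp hg
  have hbA : b ∈ A := by simpa [← hbg] using (Subring.mem_composite _ _).mp g.2
  have hinv : C b⁻¹ ∈ A.toSubring.composite := by
    simpa [Subring.mem_composite] using A.inv_mem hbA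
  refine IsUnit.of_mul_eq_one (b := ⟨C b⁻¹, hinv⟩) (Subtype.ext ?_)
  simp [← hbg, ← C_mul, hb.ne_zero]

instance isLocalHom_composite_subtype : IsLocalHom A.toSubring.composite.subtype :=
  ⟨fun _ hg => (A.isUnit_composite_iff).mpr hg⟩

theorem irreducible_composite_iff {f : A.toSubring.composite} :
    Irreducible f ↔ Irreducible (f : B[X]) := by
  refine ⟨fun hf => ?_, Irreducible.of_map (f := A.toSubring.composite.subtype)⟩
  refine ⟨fun hu => hf.not_isUnit (A.isUnit_composite_iff.mpr hu), fun g h hgh => ?_⟩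
  obtain ⟨c, hc, hcg, hch⟩ :=
    A.exists_C_mul_mem_composite_and_C_inv_mul_mem_composite (hgh ▸ f.2)
  have hfac : f = ⟨C c * g, hcg⟩ * ⟨C c⁻¹ * h, hch⟩ := Subtype.ext <| by
    rw [Subring.coe_mul, mul_mul_mul_comm, ← C_mul, mul_inv_cancel₀ hc, C_1, one_mul, hgh]
  refine (hf.isUnit_or_isUnit hfac).imp ?_ ?_ <;>
    exact fun hu => (IsUnit.mul_iff.mp (A.isUnit_composite_iff.mp hu)).2

end Subfield

/-- For `A ⊆ B` fields and `T = A + X·B[X]`: a polynomial `f ∈ B[X]` lies in `T` and is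
irreducible in `T` iff `f` is irreducible in `B[X]` and its constant coefficient lies in `A`. -/
theorem composite_irreducible_iff_irreducible {B : Type*} [Field B] (A : Subfield B)
    (f : Polynomial B) :
    (∃ hf : f ∈ A.toSubring.composite, Irreducible (⟨f, hf⟩ : A.toSubring.composite)) ↔
      Irreducible f ∧ f.coeff 0 ∈ A := by
  constructor
  · rintro ⟨hf, hirr⟩
    exact ⟨A.irreducible_composite_iff.mp hirr, hf⟩
  · rintro ⟨hirr, hf⟩
    exact ⟨hf, A.irreducible_composite_iff.mpr hirr⟩
end

section
/- Let K ⊆ L ⊆ M be a tower of fields such that the fixed field of the automorphism group G(M|K) = Aut_K(M) equals K. If the polynomial composite K + X·M[X] is a Noetherian ring, then M is a normal extension of L, and moreover L + X·M[X] is a Noetherian ring. -/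
open Polynomial

section Composite

variable (A B : Type*) [CommRing A] [CommRing B] [Algebra A B]

def compositeSubalgebra : Subalgebra A B[X] where
  toSubsemiring := (algebraMap A B).range.composite.toSubsemiring
  algebraMap_mem' a := by
    show (algebraMap A B[X] a).coeff 0 ∈ (algebraMap A B).range
    rw [Polynomial.algebraMap_apply, coeff_C_zero]
    exact ⟨a, rfl⟩

/- Since `f = C (f.coeff 0) + f.divX * X` and `monomial n m * X = X ^ n * (C m * X)`, the algebra
`A + X·B[X]` is generated by the `C e * X` with `e` running over `1` and generators of the
`A`-module `B`. -/
theorem compositeSubalgebra_fg [Module.Finite A B] : (compositeSubalgebra A B).FG := by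
  classical
  obtain ⟨s, hs⟩ : (⊤ : Submodule A B).FG := Module.Finite.fg_top
  let S : Subalgebra A B[X] := Algebra.adjoin A ((fun e => C e * X) '' ↑(insert 1 s))
  have hCX : ∀ m : B, C m * X ∈ S := by
    intro m
    have hm : m ∈ Submodule.span A ↑(insert 1 s) :=
      Submodule.span_mono (by simp) (hs ▸ Submodule.mem_top)
    obtain ⟨c, -, rfl⟩ := Submodule.mem_span_finset.1 hm
    simp only [map_sum, Finset.sum_mul, Algebra.smul_def, map_mul, ← Polynomial.algebraMap_apply,
      mul_assoc]
    exact Subalgebra.sum_mem _ fun e he => Subalgebra.mul_mem _ (Subalgebra.algebraMap_mem _ _)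
      (Algebra.subset_adjoin ⟨e, by simpa using he, rfl⟩)
  have hX : X ∈ S := by simpa using hCX 1
  have hmulX : ∀ g : B[X], g * X ∈ S := by
    intro g
    induction g using Polynomial.induction_on' with
    | add p q hp hq => simpa only [add_mul] using Subalgebra.add_mem _ hp hq
    | monomial n m =>
      rw [← C_mul_X_pow_eq_monomial, mul_comm (C m), mul_assoc]
      exact Subalgebra.mul_mem _ (Subalgebra.pow_mem _ hX n) (hCX m)
  refine ⟨(insert 1 s).image fun e => C e * X, le_antisymm ?_ fun f hf => ?_⟩
  · rw [Finset.coe_image, Algebra.adjoin_le_iff]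
    rintro _ ⟨e, -, rfl⟩
    show (C e * X).coeff 0 ∈ (algebraMap A B).range
    rw [coeff_mul_X_zero]
    exact zero_mem _
  · obtain ⟨a, ha⟩ : f.coeff 0 ∈ (algebraMap A B).range := hf
    rw [Finset.coe_image, ← divX_mul_X_add f, ← ha, ← Polynomial.algebraMap_apply]
    exact Subalgebra.add_mem _ (hmulX _) (Subalgebra.algebraMap_mem _ _)

theorem isNoetherianRing_composite_of_finite [IsNoetherianRing A] [Module.Finite A B] :
    IsNoetherianRing (algebraMap A B).range.composite :=
  have : Algebra.FiniteType A (compositeSubalgebra A B) :=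
    (Subalgebra.fg_iff_finiteType _).1 (compositeSubalgebra_fg A B)
  Algebra.FiniteType.isNoetherianRing A (compositeSubalgebra A B)

/- The ideal `X·B[X]` of `A + X·B[X]` is finitely generated, and the coefficients of `X` of its
generators span `B` over `A`: for `g` without constant term,
`(f * g).coeff 1 = f.coeff 0 * g.coeff 1` with `f.coeff 0 ∈ A`. -/
theorem Module.Finite.of_isNoetherianRing_composite
    (h : IsNoetherianRing (algebraMap A B).range.composite) : Module.Finite A B := by
  classical
  let R := (algebraMap A B).range.composite
  let I : Ideal R := RingHom.ker (constantCoeff.comp R.subtype)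
  obtain ⟨s, hs⟩ : I.FG := IsNoetherian.noetherian I
  refine ⟨⟨s.image fun g : R => (g : B[X]).coeff 1, eq_top_iff.2 fun (m : B) _ => ?_⟩⟩
  have hmR : C m * X ∈ R := by
    rw [Subring.mem_composite, coeff_mul_X_zero]
    exact zero_mem _
  have hmI : (⟨C m * X, hmR⟩ : R) ∈ I := coeff_mul_X_zero (C m)
  rw [← hs, Ideal.span, Submodule.mem_span_finset] at hmI
  obtain ⟨c, -, hc⟩ := hmI
  have hm : m = ∑ g ∈ s, (c g : B[X]).coeff 0 * (g : B[X]).coeff 1 := by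
    have hgI : ∀ g ∈ s, (g : B[X]).coeff 0 = 0 := fun g hg =>
      (hs ▸ Ideal.subset_span hg : g ∈ I)
    have := congrArg (fun f : R => (f : B[X]).coeff 1) hc
    simp only [AddSubmonoidClass.coe_finsetSum, finsetSum_coeff, smul_eq_mul, Subring.coe_mul,
      mul_coeff_one, coeff_X_one, coeff_X_zero, coeff_C_zero, mul_one, mul_zero, add_zero] at this
    rw [← this]
    exact Finset.sum_congr rfl fun g hg => by rw [hgI g hg, mul_zero, add_zero]
  rw [hm]
  refine Submodule.sum_mem _ fun g hg => ?_
  obtain ⟨a, ha⟩ := (c g).2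
  rw [← ha, ← Algebra.smul_def]
  exact Submodule.smul_mem _ _ (Submodule.subset_span (Finset.mem_image_of_mem _ hg))

end Composite

/-- For a tower of fields `K ⊆ L ⊆ M` such that the fixed field of `G(M|K) = Aut_K(M)` is `K`:
if `K + X·M[X]` is Noetherian, then `M` is a normal extension of `L` and `L + X·M[X]` is
Noetherian. -/
theorem composite_tower_normal (K L M : Type*) [Field K] [Field L] [Field M]
    [Algebra K L] [Algebra L M] [Algebra K M] [IsScalarTower K L M]
    (hfix : ∀ x : M, (∀ σ : M ≃ₐ[K] M, σ x = x) → ∃ k : K, algebraMap K M k = x)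
    (h : IsNoetherianRing ((algebraMap K M).range.composite)) :
    Normal L M ∧ IsNoetherianRing ((algebraMap L M).range.composite) := by
  have : FiniteDimensional K M := .of_isNoetherianRing_composite K M h
  have : IsGalois K M := IsGalois.of_fixedField_eq_bot K M <| eq_bot_iff.2 fun x hx =>
    IntermediateField.mem_bot.2 (hfix x fun σ => hx ⟨σ, Subgroup.mem_top σ⟩)
  have : FiniteDimensional L M := .right K L M
  exact ⟨Normal.tower_top_of_normal K L M, isNoetherianRing_composite_of_finite L M⟩
end
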